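/- Let P and Q be discrete probability measures supported on at most n points each, and let W_ε denote the entropically regularized optimal transport cost with regularization parameter ε > 0 (transport cost plus ε times KL divergence of the coupling from the product measure). Then W1(P, Q) ≤ W_ε(P, Q) ≤ W1(P, Q) + ε log n. -/
import Mathlib

open MeasureTheory

variable {d n : ℕ}

/-- A coupling of two discrete probability vectors `p`, `q` on `n` points. -/
def IsDiscreteCoupling (p q : Fin n → ℝ) (γ : Fin n → Fin n → ℝ) : Prop :=
  (∀ i j, 0 ≤ γ i j) ∧ (∀ i, ∑ j, γ i j = p i) ∧ (∀ j, ∑ i, γ i j = q j)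

/-- Transport cost of a coupling between point sets `x`, `y`. -/
noncomputable def transportCost (x y : Fin n → EuclideanSpace ℝ (Fin d))
    (γ : Fin n → Fin n → ℝ) : ℝ :=
  ∑ i, ∑ j, γ i j * dist (x i) (y j)

/-- KL divergence of a coupling from the product measure `p ⊗ q`. -/
noncomputable def couplingKL (p q : Fin n → ℝ) (γ : Fin n → Fin n → ℝ) : ℝ :=
  ∑ i, ∑ j, γ i j * Real.log (γ i j / (p i * q j))

/-- Unregularized discrete 1-Wasserstein cost. -/
noncomputable def discreteW1 (x y : Fin n → EuclideanSpace ℝ (Fin d))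
    (p q : Fin n → ℝ) : ℝ :=
  sInf {r : ℝ | ∃ γ, IsDiscreteCoupling p q γ ∧ r = transportCost x y γ}

/-- Entropically regularized optimal transport cost with parameter `ε`. -/
noncomputable def discreteWeps (x y : Fin n → EuclideanSpace ℝ (Fin d))
    (p q : Fin n → ℝ) (ε : ℝ) : ℝ :=
  sInf {r : ℝ | ∃ γ, IsDiscreteCoupling p q γ ∧
    r = transportCost x y γ + ε * couplingKL p q γ}

lemma gibbs_pt (a b : ℝ) (ha : 0 ≤ a) (hb : 0 ≤ b) (h : a ≠ 0 → 0 < b) :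
    a - b ≤ a * Real.log (a / b) := by
  rcases eq_or_lt_of_le ha with h0 | ha'
  · rw [← h0]; simpa using hb
  · have hb' : 0 < b := h ha'.ne'
    have hlog : Real.log (b / a) ≤ b / a - 1 := Real.log_le_sub_one_of_pos (div_pos hb' ha')
    have hinv : Real.log (a / b) = - Real.log (b / a) := by
      rw [← Real.log_inv]; congr 1; field_simp
    have hab : a * (b / a) = b := mul_div_cancel₀ b ha'.ne'
    rw [hinv]
    nlinarith [mul_le_mul_of_nonneg_left hlog ha]

lemma abs_cont (p q : Fin n → ℝ) (γ : Fin n → Fin n → ℝ)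
    (hp0 : ∀ i, 0 ≤ p i) (hq0 : ∀ j, 0 ≤ q j)
    (hγ : IsDiscreteCoupling p q γ) (i j : Fin n) (hne : γ i j ≠ 0) :
    0 < p i * q j := by
  obtain ⟨hg0, hgr, hgc⟩ := hγ
  have hpi : 0 < p i := by
    rcases eq_or_lt_of_le (hp0 i) with h0 | h; swap; · exact h
    exfalso
    have hs : ∑ j', γ i j' = 0 := by rw [hgr i, ← h0]
    exact hne ((Finset.sum_eq_zero_iff_of_nonneg (fun j' _ => hg0 i j')).mp hs j (Finset.mem_univ j))
  have hqj : 0 < q j := by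
    rcases eq_or_lt_of_le (hq0 j) with h0 | h; swap; · exact h
    exfalso
    have hs : ∑ i', γ i' j = 0 := by rw [hgc j, ← h0]
    exact hne ((Finset.sum_eq_zero_iff_of_nonneg (fun i' _ => hg0 i' j)).mp hs i (Finset.mem_univ i))
  exact mul_pos hpi hqj

lemma KL_nonneg (p q : Fin n → ℝ) (γ : Fin n → Fin n → ℝ)
    (hp0 : ∀ i, 0 ≤ p i) (hq0 : ∀ j, 0 ≤ q j)
    (hp1 : ∑ i, p i = 1) (hq1 : ∑ j, q j = 1)
    (hγ : IsDiscreteCoupling p q γ) : 0 ≤ couplingKL p q γ := by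
  obtain ⟨hg0, hgr, hgc⟩ := hγ
  have key : ∀ i j, γ i j - p i * q j ≤ γ i j * Real.log (γ i j / (p i * q j)) := fun i j =>
    gibbs_pt _ _ (hg0 i j) (mul_nonneg (hp0 i) (hq0 j))
      (abs_cont p q γ hp0 hq0 ⟨hg0, hgr, hgc⟩ i j)
  have h1 : (∑ i, ∑ j, (γ i j - p i * q j)) ≤ couplingKL p q γ :=
    Finset.sum_le_sum fun i _ => Finset.sum_le_sum fun j _ => key i j
  have h2 : (∑ i, ∑ j, (γ i j - p i * q j)) = 0 := by
    simp only [Finset.sum_sub_distrib, ← Finset.mul_sum, hq1, mul_one, hgr, hp1, sub_self,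
      Finset.sum_const_zero]
  linarith

lemma KL_le_log (hn : 0 < n) (p q : Fin n → ℝ) (γ : Fin n → Fin n → ℝ)
    (hp0 : ∀ i, 0 ≤ p i) (hq0 : ∀ j, 0 ≤ q j)
    (hp1 : ∑ i, p i = 1) (hq1 : ∑ j, q j = 1)
    (hγ : IsDiscreteCoupling p q γ) : couplingKL p q γ ≤ Real.log n := by
  obtain ⟨hg0, hgr, hgc⟩ := hγ
  have stepA : ∀ i j, γ i j * Real.log (γ i j / (p i * q j)) ≤ -(γ i j * Real.log (q j)) := by
    intro i j
    rcases eq_or_lt_of_le (hg0 i j) with h0 | hpos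
    · rw [← h0]; simp
    · have hpq := abs_cont p q γ hp0 hq0 ⟨hg0, hgr, hgc⟩ i j hpos.ne'
      have hpi : 0 < p i := by nlinarith [hp0 i, hq0 j]
      have hqj : 0 < q j := by nlinarith [hp0 i, hq0 j]
      have hγle : γ i j ≤ p i := by
        rw [← hgr i]
        exact Finset.single_le_sum (fun j' _ => hg0 i j') (Finset.mem_univ j)
      have hle : γ i j / (p i * q j) ≤ (q j)⁻¹ := by
        rw [div_le_iff₀ hpq]
        have h : (q j)⁻¹ * (p i * q j) = p i := by
          rw [mul_comm (p i), ← mul_assoc, inv_mul_cancel₀ hqj.ne', one_mul]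
        rw [h]; exact hγle
      have := Real.log_le_log (div_pos hpos hpq) hle
      rw [Real.log_inv] at this
      calc γ i j * Real.log (γ i j / (p i * q j)) ≤ γ i j * -Real.log (q j) :=
            mul_le_mul_of_nonneg_left this (hg0 i j)
        _ = -(γ i j * Real.log (q j)) := by ring
  have stepB : couplingKL p q γ ≤ -(∑ j, q j * Real.log (q j)) := by
    calc couplingKL p q γ ≤ ∑ i, ∑ j, -(γ i j * Real.log (q j)) :=
          Finset.sum_le_sum fun i _ => Finset.sum_le_sum fun j _ => stepA i j
      _ = -(∑ j, q j * Real.log (q j)) := by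
          rw [Finset.sum_comm]
          have h1 : ∀ j, ∑ i, -(γ i j * Real.log (q j)) = -(q j * Real.log (q j)) := by
            intro j
            rw [Finset.sum_neg_distrib, ← Finset.sum_mul, hgc]
          rw [Finset.sum_congr rfl fun j _ => h1 j, Finset.sum_neg_distrib]
  have stepC : -(∑ j, q j * Real.log (q j)) ≤ Real.log n := by
    have hn' : (0:ℝ) < n := Nat.cast_pos.mpr hn
    have pt : ∀ j, q j - 1/n ≤ q j * Real.log (q j) + q j * Real.log n := by
      intro j
      rcases eq_or_lt_of_le (hq0 j) with h0 | hpos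
      · rw [← h0]
        simp only [zero_mul, zero_add, zero_sub, add_zero, neg_nonpos]
        positivity
      · have := gibbs_pt (q j) (1/n) (hq0 j) (by positivity) (fun _ => by positivity)
        have hdiv : q j / (1/(n:ℝ)) = q j * n := by field_simp
        rw [hdiv, Real.log_mul hpos.ne' hn'.ne'] at this
        linarith [mul_add (q j) (Real.log (q j)) (Real.log n), this]
    have hsum := Finset.sum_le_sum (fun j (_ : j ∈ Finset.univ) => pt j)
    simp only [Finset.sum_sub_distrib, Finset.sum_add_distrib, hq1, ← Finset.sum_mul,
      Finset.sum_const, Finset.card_univ, Fintype.card_fin, nsmul_eq_mul, one_mul] at hsum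
    have : (n:ℝ) * (1/n) = 1 := by field_simp
    linarith
  linarith

lemma cost_nonneg (x y : Fin n → EuclideanSpace ℝ (Fin d)) (γ : Fin n → Fin n → ℝ)
    (hg0 : ∀ i j, 0 ≤ γ i j) : 0 ≤ transportCost x y γ :=
  Finset.sum_nonneg fun i _ => Finset.sum_nonneg fun j _ =>
    mul_nonneg (hg0 i j) dist_nonneg

/-- **Sinkhorn approximation bound.** For discrete probability measures
supported on at most `n` points each, `W1 ≤ W_ε ≤ W1 + ε log n`. -/
theorem stmt15 (hn : 0 < n) (x y : Fin n → EuclideanSpace ℝ (Fin d))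
    (p q : Fin n → ℝ)
    (hp0 : ∀ i, 0 ≤ p i) (hq0 : ∀ j, 0 ≤ q j)
    (hp1 : ∑ i, p i = 1) (hq1 : ∑ j, q j = 1)
    (ε : ℝ) (hε : 0 < ε) :
    discreteW1 x y p q ≤ discreteWeps x y p q ε ∧
      discreteWeps x y p q ε ≤ discreteW1 x y p q + ε * Real.log n := by
  set S1 := {r : ℝ | ∃ γ, IsDiscreteCoupling p q γ ∧ r = transportCost x y γ} with hS1def
  set S2 := {r : ℝ | ∃ γ, IsDiscreteCoupling p q γ ∧
    r = transportCost x y γ + ε * couplingKL p q γ} with hS2def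
  have hγ0 : IsDiscreteCoupling p q (fun i j => p i * q j) := by
    refine ⟨fun i j => mul_nonneg (hp0 i) (hq0 j), fun i => ?_, fun j => ?_⟩
    · rw [← Finset.mul_sum, hq1, mul_one]
    · rw [← Finset.sum_mul, hp1, one_mul]
  have hS1ne : S1.Nonempty := ⟨_, ⟨_, hγ0, rfl⟩⟩
  have hS2ne : S2.Nonempty := ⟨_, ⟨_, hγ0, rfl⟩⟩
  have hS1bdd : BddBelow S1 := by
    refine ⟨0, fun r hr => ?_⟩
    obtain ⟨γ, hγ, rfl⟩ := hr
    exact cost_nonneg x y γ hγ.1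
  have hS2bdd : BddBelow S2 := by
    refine ⟨0, fun r hr => ?_⟩
    obtain ⟨γ, hγ, rfl⟩ := hr
    have := KL_nonneg p q γ hp0 hq0 hp1 hq1 hγ
    have := cost_nonneg x y γ hγ.1
    nlinarith
  constructor
  · apply le_csInf hS2ne
    rintro r ⟨γ, hγ, rfl⟩
    have h1 : discreteW1 x y p q ≤ transportCost x y γ :=
      csInf_le hS1bdd ⟨γ, hγ, rfl⟩
    have h2 := KL_nonneg p q γ hp0 hq0 hp1 hq1 hγ
    nlinarith
  · have key : ∀ r ∈ S1, discreteWeps x y p q ε - ε * Real.log n ≤ r := by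
      rintro r ⟨γ, hγ, rfl⟩
      have h1 : discreteWeps x y p q ε ≤ transportCost x y γ + ε * couplingKL p q γ :=
        csInf_le hS2bdd ⟨γ, hγ, rfl⟩
      have h2 := KL_le_log hn p q γ hp0 hq0 hp1 hq1 hγ
      nlinarith
    have := le_csInf hS1ne key
    have hW1 : discreteW1 x y p q = sInf S1 := rfl
    linarith [this]
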